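/- Let a, ν, v, w : ℕ → ℕ satisfy: v 5 ≥ 3, ν 5 ≥ 26, w 7 ≥ 4; for every natural number n with 6 ≤ n ≤ 12: (i) a (n−1) ≥ ν (n−1) + 1; (ii) 2·(n−1)·(v n) ≥ a (n−1) · v (n−1); (iii) ν n + 2·n ≥ 2·ν (n−1) + 5; (iv) ν n ≥ a (n−1) + v n; and for every natural number n with 8 ≤ n ≤ 12: (v) n·(w n) ≥ a (n−1) · w (n−1). Then w 11 ≥ 38900657762. -/
import Mathlib


/-- Lower bound for the number of finite vertices in dimension 11. -/
theorem finite_vertices_dim11 (a ν v w : ℕ → ℕ)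
    (hv5 : 3 ≤ v 5) (hν5 : 26 ≤ ν 5) (hw7 : 4 ≤ w 7)
    (hi : ∀ n : ℕ, 6 ≤ n → n ≤ 12 → ν (n - 1) + 1 ≤ a (n - 1))
    (hii : ∀ n : ℕ, 6 ≤ n → n ≤ 12 → a (n - 1) * v (n - 1) ≤ 2 * (n - 1) * v n)
    (hiii : ∀ n : ℕ, 6 ≤ n → n ≤ 12 → 2 * ν (n - 1) + 5 ≤ ν n + 2 * n)
    (hiv : ∀ n : ℕ, 6 ≤ n → n ≤ 12 → a (n - 1) + v n ≤ ν n)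
    (hv' : ∀ n : ℕ, 8 ≤ n → n ≤ 12 → a (n - 1) * w (n - 1) ≤ n * w n) :
    38900657762 ≤ w 11 := by
  have ha5 : 27 ≤ a 5 := by have := hi 6 (by norm_num) (by norm_num); norm_num at this; omega
  have hv6 : 9 ≤ v 6 := by
    have h := hii 6 (by norm_num) (by norm_num)
    norm_num at h
    have h2 : (81:ℕ) ≤ 2 * (6-1) * v 6 := le_trans (Nat.mul_le_mul ha5 hv5) h
    omega
  have hν6 : 45 ≤ ν 6 := by have := hiii 6 (by norm_num) (by norm_num); norm_num at this; omega
  have ha6 : 46 ≤ a 6 := by have := hi 7 (by norm_num) (by norm_num); norm_num at this; omega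
  have hv7 : 35 ≤ v 7 := by
    have h := hii 7 (by norm_num) (by norm_num)
    norm_num at h
    have h2 : (414:ℕ) ≤ 2 * (7-1) * v 7 := le_trans (Nat.mul_le_mul ha6 hv6) h
    omega
  have hν7 : 81 ≤ ν 7 := by have := hiv 7 (by norm_num) (by norm_num); norm_num at this; omega
  have ha7 : 82 ≤ a 7 := by have := hi 8 (by norm_num) (by norm_num); norm_num at this; omega
  have hv8 : 205 ≤ v 8 := by
    have h := hii 8 (by norm_num) (by norm_num)
    norm_num at h
    have h2 : (2870:ℕ) ≤ 2 * (8-1) * v 8 := le_trans (Nat.mul_le_mul ha7 hv7) h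
    omega
  have hν8 : 287 ≤ ν 8 := by have := hiv 8 (by norm_num) (by norm_num); norm_num at this; omega
  have hw8 : 41 ≤ w 8 := by
    have h := hv' 8 (by norm_num) (by norm_num)
    norm_num at h
    have h2 : (328:ℕ) ≤ 8 * w 8 := le_trans (Nat.mul_le_mul ha7 hw7) h
    omega
  have ha8 : 288 ≤ a 8 := by have := hi 9 (by norm_num) (by norm_num); norm_num at this; omega
  have hv9 : 3690 ≤ v 9 := by
    have h := hii 9 (by norm_num) (by norm_num)
    norm_num at h
    have h2 : (59040:ℕ) ≤ 2 * (9-1) * v 9 := le_trans (Nat.mul_le_mul ha8 hv8) h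
    omega
  have hν9 : 3978 ≤ ν 9 := by have := hiv 9 (by norm_num) (by norm_num); norm_num at this; omega
  have hw9 : 1312 ≤ w 9 := by
    have h := hv' 9 (by norm_num) (by norm_num)
    norm_num at h
    have h2 : (11808:ℕ) ≤ 9 * w 9 := le_trans (Nat.mul_le_mul ha8 hw8) h
    omega
  have ha9 : 3979 ≤ a 9 := by have := hi 10 (by norm_num) (by norm_num); norm_num at this; omega
  have hv10 : 815695 ≤ v 10 := by
    have h := hii 10 (by norm_num) (by norm_num)
    norm_num at h
    have h2 : (14682510:ℕ) ≤ 2 * (10-1) * v 10 := le_trans (Nat.mul_le_mul ha9 hv9) h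
    omega
  have hν10 : 819674 ≤ ν 10 := by have := hiv 10 (by norm_num) (by norm_num); norm_num at this; omega
  have hw10 : 522045 ≤ w 10 := by
    have h := hv' 10 (by norm_num) (by norm_num)
    norm_num at h
    have h2 : (5220448:ℕ) ≤ 10 * w 10 := le_trans (Nat.mul_le_mul ha9 hw9) h
    omega
  have ha10 : 819675 ≤ a 10 := by have := hi 11 (by norm_num) (by norm_num); norm_num at this; omega
  have h := hv' 11 (by norm_num) (by norm_num)
  norm_num at h
  have h2 : (819675*522045:ℕ) ≤ 11 * w 11 := le_trans (Nat.mul_le_mul ha10 hw10) h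
  norm_num at h2
  omega
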